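/- Let k, t > 0, let a ∈ (kt, 3kt/2) and set a' := 2kt − a. Define, for x ∈ [0, k²t²/4), h(x) := k² (a² + a'² − 2k²t² + 2x) / (√((a² − k²t² + x)² + 4k²(t²+1)x) · √((a'² − k²t² + x)² + 4k²(t²+1)x)). Then h is monotonically nonincreasing on [0, k²t²/4), i.e., for all 0 ≤ x ≤ y < k²t²/4 one has h(y) ≤ h(x). -/

import Mathlib

/-- The modulus `h(ξ_d²)` of the symmetrized symbol, written with `a = ‖ξ⁻‖`,
`a' = 2kt − a` and `x = ξ_d²`. -/
noncomputable def hFun (k t a : ℝ) (x : ℝ) : ℝ :=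
  k ^ 2 * (a ^ 2 + (2 * k * t - a) ^ 2 - 2 * k ^ 2 * t ^ 2 + 2 * x)
    / (Real.sqrt ((a ^ 2 - k ^ 2 * t ^ 2 + x) ^ 2 + 4 * k ^ 2 * (t ^ 2 + 1) * x)
      * Real.sqrt (((2 * k * t - a) ^ 2 - k ^ 2 * t ^ 2 + x) ^ 2
        + 4 * k ^ 2 * (t ^ 2 + 1) * x))

/-!
Put `s = a − kt` and `u = s² + x`. The two radicands are `P(u) ± 4kts·u` with
`P(u) = u² + 4k²(t² + 1)u − 4k²s²`, so their product is `u² · ((P(u)/u)² − (4kts)²)` and,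
the numerator being `2k²u`, `h = 2k² / √((P(u)/u)² − (4kts)²)`. On `u ≥ s²` the ratio
`P(u)/u = u + 4k²(t² + 1) − 4k²s²/u` is increasing and at least `s² + 4k²t² ≥ 0`, so the
discriminant under the root increases from its value `(s² − 4k²t²)²` at `x = 0`.
-/

namespace HFun

open Real

variable {k t a u v x : ℝ}

noncomputable def ratio (k t a u : ℝ) : ℝ :=
  u + 4 * k ^ 2 * (t ^ 2 + 1) - 4 * k ^ 2 * (a - k * t) ^ 2 / u

noncomputable def disc (k t a u : ℝ) : ℝ :=
  ratio k t a u ^ 2 - (4 * k * t * (a - k * t)) ^ 2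

lemma radicand_mul_radicand (k t a x : ℝ) :
    ((a ^ 2 - k ^ 2 * t ^ 2 + x) ^ 2 + 4 * k ^ 2 * (t ^ 2 + 1) * x)
      * (((2 * k * t - a) ^ 2 - k ^ 2 * t ^ 2 + x) ^ 2 + 4 * k ^ 2 * (t ^ 2 + 1) * x)
      = (((a - k * t) ^ 2 + x) ^ 2 + 4 * k ^ 2 * (t ^ 2 + 1) * ((a - k * t) ^ 2 + x)
          - 4 * k ^ 2 * (a - k * t) ^ 2) ^ 2
        - (4 * k * t * (a - k * t) * ((a - k * t) ^ 2 + x)) ^ 2 := by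
  ring

lemma sq_mul_disc (hu : u ≠ 0) :
    u ^ 2 * disc k t a u
      = (u ^ 2 + 4 * k ^ 2 * (t ^ 2 + 1) * u - 4 * k ^ 2 * (a - k * t) ^ 2) ^ 2
        - (4 * k * t * (a - k * t) * u) ^ 2 := by
  unfold disc ratio
  field_simp

lemma hFun_eq (hs : a ≠ k * t) (hx : 0 ≤ x) :
    hFun k t a x = 2 * k ^ 2 / √(disc k t a ((a - k * t) ^ 2 + x)) := by
  set u := (a - k * t) ^ 2 + x with hu_def
  have hu : 0 < u := by have := sq_pos_of_ne_zero (sub_ne_zero.mpr hs); positivity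
  have hnum : a ^ 2 + (2 * k * t - a) ^ 2 - 2 * k ^ 2 * t ^ 2 + 2 * x = 2 * u := by ring
  have hden :
      √((a ^ 2 - k ^ 2 * t ^ 2 + x) ^ 2 + 4 * k ^ 2 * (t ^ 2 + 1) * x)
        * √(((2 * k * t - a) ^ 2 - k ^ 2 * t ^ 2 + x) ^ 2 + 4 * k ^ 2 * (t ^ 2 + 1) * x)
        = u * √(disc k t a u) := by
    rw [← sqrt_mul (by positivity), radicand_mul_radicand, ← hu_def, ← sq_mul_disc hu.ne',
      sqrt_mul (sq_nonneg u), sqrt_sq hu.le]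
  rw [hFun, hnum, hden, show k ^ 2 * (2 * u) = u * (2 * k ^ 2) by ring,
    mul_div_mul_left _ _ hu.ne']

lemma ratio_mono (hu : 0 < u) (huv : u ≤ v) : ratio k t a u ≤ ratio k t a v := by
  unfold ratio
  have : 4 * k ^ 2 * (a - k * t) ^ 2 / v ≤ 4 * k ^ 2 * (a - k * t) ^ 2 / u :=
    div_le_div_of_nonneg_left (by positivity) hu huv
  linarith

lemma ratio_sq_sub (hs : a ≠ k * t) :
    ratio k t a ((a - k * t) ^ 2) = (a - k * t) ^ 2 + 4 * k ^ 2 * t ^ 2 := by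
  have : (a - k * t) ^ 2 ≠ 0 := pow_ne_zero 2 (sub_ne_zero.mpr hs)
  unfold ratio
  field_simp
  ring

lemma disc_sq_sub (hs : a ≠ k * t) :
    disc k t a ((a - k * t) ^ 2) = ((a - k * t) ^ 2 - 4 * k ^ 2 * t ^ 2) ^ 2 := by
  rw [disc, ratio_sq_sub hs]
  ring

lemma disc_mono (hs : a ≠ k * t) (hu : (a - k * t) ^ 2 ≤ u) (huv : u ≤ v) :
    disc k t a u ≤ disc k t a v := by
  have hs₀ : 0 < (a - k * t) ^ 2 := sq_pos_of_ne_zero (sub_ne_zero.mpr hs)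
  have hratio : 0 ≤ ratio k t a u := by
    calc (0 : ℝ) ≤ (a - k * t) ^ 2 + 4 * k ^ 2 * t ^ 2 := by positivity
      _ = ratio k t a ((a - k * t) ^ 2) := (ratio_sq_sub hs).symm
      _ ≤ ratio k t a u := ratio_mono hs₀ hu
  unfold disc
  gcongr ?_ - _
  exact pow_le_pow_left₀ hratio (ratio_mono (hs₀.trans_le hu) huv) 2

lemma disc_pos (hs : a ≠ k * t) (hs' : (a - k * t) ^ 2 ≠ 4 * k ^ 2 * t ^ 2)
    (hu : (a - k * t) ^ 2 ≤ u) : 0 < disc k t a u :=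
  calc 0 < ((a - k * t) ^ 2 - 4 * k ^ 2 * t ^ 2) ^ 2 := by
        have := sub_ne_zero.mpr hs'; positivity
    _ = disc k t a ((a - k * t) ^ 2) := (disc_sq_sub hs).symm
    _ ≤ disc k t a u := disc_mono hs le_rfl hu

end HFun

open HFun in
theorem hFun_antitoneOn {k t a : ℝ} (hs : a ≠ k * t)
    (hs' : (a - k * t) ^ 2 ≠ 4 * k ^ 2 * t ^ 2) : AntitoneOn (hFun k t a) (Set.Ici 0) := by
  intro x hx y hy hxy
  have hu : (a - k * t) ^ 2 ≤ (a - k * t) ^ 2 + x := le_add_of_nonneg_right hx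
  rw [hFun_eq hs hx, hFun_eq hs hy]
  exact div_le_div_of_nonneg_left (by positivity) (Real.sqrt_pos.mpr (disc_pos hs hs' hu))
    (Real.sqrt_le_sqrt (disc_mono hs hu (by linarith)))

theorem stmt_9_general (k t a : ℝ)
    (ha : k * t < a) (ha' : a < 3 * k * t / 2) :
    ∀ x y : ℝ, 0 ≤ x → x ≤ y → y < k ^ 2 * t ^ 2 / 4 →
      hFun k t a y ≤ hFun k t a x := by
  intro x y hx hxy _
  have hkt : 0 < k * t := by linarith
  have hs' : (a - k * t) ^ 2 ≠ 4 * k ^ 2 * t ^ 2 := by nlinarith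
  exact hFun_antitoneOn ha.ne' hs' hx (hx.trans hxy) hxy

/-- The function `h` is monotonically nonincreasing on `[0, k²t²/4)`. -/
theorem stmt_9 (k t a : ℝ) (hk : 0 < k) (ht : 0 < t)
    (ha : k * t < a) (ha' : a < 3 * k * t / 2) :
    ∀ x y : ℝ, 0 ≤ x → x ≤ y → y < k ^ 2 * t ^ 2 / 4 →
      hFun k t a y ≤ hFun k t a x :=
  stmt_9_general k t a ha ha'
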